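/- Let n ≥ 1 and let χ be a ℂ-linear functional on the vector space C^∞(𝕋ⁿ; ℂ) of smooth 2π-periodic functions on ℝⁿ such that χ(∂_{x_ℓ} f) = 0 for every f ∈ C^∞(𝕋ⁿ; ℂ) and every ℓ ∈ {1, …, n}. Then for every f ∈ C^∞(𝕋ⁿ; ℂ), χ(f) = c ∫_{[0,2π]^n} f(x) dx, where c = (2π)^{−n} χ(1). In particular, χ is a constant multiple of integration over the torus. -/

import Mathlib

/-! Averaging over the `ℓ`-th coordinate circle changes a smooth periodic `f` only by the `ℓ`-th
partial derivative of a smooth periodic function, so it changes neither `χ f` nor the integral of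
`f` over the period cell. Averaging successively over all `n` coordinate circles yields a function
invariant under every coordinate translation, i.e. the constant `(2π)⁻ⁿ ∫ f`, and `χ` of that
constant is `(2π)⁻ⁿ (∫ f) χ 1`. -/

open MeasureTheory Real

/-- The space `C^∞(𝕋ⁿ; ℂ)` of smooth functions on `ℝⁿ` that are `2π`-periodic in each
variable, as a `ℂ`-submodule of all functions `ℝⁿ → ℂ`. -/
noncomputable def SmoothPeriodic (n : ℕ) : Submodule ℂ ((Fin n → ℝ) → ℂ) where
  carrier := {f | ContDiff ℝ (⊤ : ℕ∞) f ∧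
    ∀ (x : Fin n → ℝ) (ℓ : Fin n), f (x + Pi.single ℓ (2 * π)) = f x}
  add_mem' := by
    rintro f g ⟨hf, hf'⟩ ⟨hg, hg'⟩
    exact ⟨hf.add hg, fun x ℓ => by simp [hf' x ℓ, hg' x ℓ]⟩
  zero_mem' := ⟨contDiff_const, fun _ _ => rfl⟩
  smul_mem' := by
    rintro c f ⟨hf, hf'⟩
    refine ⟨?_, fun x ℓ => by simp [hf' x ℓ]⟩
    show ContDiff ℝ (⊤ : ℕ∞) fun x => c • f x
    exact hf.const_smul c

open Set

section ParametricIntegral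

variable {E F : Type*} [NormedAddCommGroup E] [NormedSpace ℝ E]
  [NormedAddCommGroup F] [NormedSpace ℝ F]

theorem hasFDerivAt_intervalIntegral_of_continuous [ProperSpace E] {φ : E → ℝ → F}
    {φ' : E → ℝ → E →L[ℝ] F}
    (hφ : Continuous (Function.uncurry φ)) (hφ' : Continuous (Function.uncurry φ'))
    (hd : ∀ x t, HasFDerivAt (φ · t) (φ' x t) x) (a b : ℝ) (x₀ : E) :
    HasFDerivAt (fun x => ∫ t in a..b, φ x t) (∫ t in a..b, φ' x₀ t) x₀ := by
  obtain ⟨C, hC⟩ := ((isCompact_closedBall x₀ 1).prod isCompact_uIcc).exists_bound_of_continuousOn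
    hφ'.continuousOn
  refine intervalIntegral.hasFDerivAt_integral_of_dominated_of_fderiv_le (bound := fun _ => C)
    (Metric.ball_mem_nhds x₀ one_pos)
    (.of_forall fun x => (hφ.uncurry_left x).aestronglyMeasurable)
    ((hφ.uncurry_left x₀).intervalIntegrable a b)
    (hφ'.uncurry_left x₀).aestronglyMeasurable
    (.of_forall fun t ht x hx => hC (x, t) ⟨Metric.ball_subset_closedBall hx, uIoc_subset_uIcc ht⟩)
    intervalIntegrable_const (.of_forall fun t _ x _ => hd x t)

theorem contDiff_intervalIntegral [FiniteDimensional ℝ E] [CompleteSpace F] {k : ℕ∞}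
    {φ : E → ℝ → F} (hφ : ContDiff ℝ k (Function.uncurry φ)) (a b : ℝ) :
    ContDiff ℝ k fun x => ∫ t in a..b, φ x t := by
  induction k using ENat.nat_induction generalizing φ with
  | zero =>
    exact contDiff_zero.2 (intervalIntegral.continuous_parametric_intervalIntegral_of_continuous'
      (contDiff_zero.1 hφ) a b)
  | succ k ih =>
    have hφ1 : ContDiff ℝ 1 (Function.uncurry φ) := hφ.of_le (by exact_mod_cast le_add_self)
    set φ' : E → ℝ → E →L[ℝ] F :=
      fun x t => (fderiv ℝ (Function.uncurry φ) (x, t)).comp (.inl ℝ E ℝ)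
    have hφ' : ContDiff ℝ k (Function.uncurry φ') :=
      (hφ.fderiv_right (by push_cast; rfl)).clm_comp contDiff_const
    have hd (x : E) (t : ℝ) : HasFDerivAt (φ · t) (φ' x t) x :=
      (hφ1.differentiable one_ne_zero (x, t)).hasFDerivAt.comp (f := fun x => (x, t)) x
        (hasFDerivAt_prodMk_left x t)
    have hderiv (x₀ : E) := hasFDerivAt_intervalIntegral_of_continuous hφ.continuous
      hφ'.continuous hd a b x₀
    push_cast
    refine contDiff_succ_iff_fderiv_apply.2 ⟨fun x => (hderiv x).differentiableAt, by simp,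
      fun v => ?_⟩
    have happly (x : E) : fderiv ℝ (fun x => ∫ t in a..b, φ x t) x v = ∫ t in a..b, φ' x t v := by
      rw [(hderiv x).fderiv, ContinuousLinearMap.intervalIntegral_apply
        ((hφ'.continuous.uncurry_left x).intervalIntegrable a b)]
    simp_rw [happly]
    exact ih (φ := fun x t => φ' x t v) (hφ'.clm_apply contDiff_const)
  | top h => exact contDiff_infty.2 fun k => h k (hφ.of_le (by exact_mod_cast le_top))

end ParametricIntegral

section PeriodCell

variable {E : Type*} [NormedAddCommGroup E] [NormedSpace ℝ E]

abbrev periodCell (n : ℕ) : Set (Fin n → ℝ) := Icc 0 fun _ => 2 * π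

theorem setIntegral_periodCell_succ {m : ℕ} (ℓ : Fin (m + 1)) {F : (Fin (m + 1) → ℝ) → E}
    (hF : Continuous F) :
    ∫ x in periodCell (m + 1), F x = ∫ y in periodCell m, ∫ t in 0..2 * π, F (ℓ.insertNth t y) := by
  set e : ℝ × (Fin m → ℝ) ≃ᵐ (Fin (m + 1) → ℝ) :=
    (MeasurableEquiv.piFinSuccAbove (fun _ => ℝ) ℓ).symm
  have he : MeasurePreserving e :=
    (volume_preserving_piFinSuccAbove (fun _ : Fin (m + 1) => ℝ) ℓ).symm _
  have hcell : e ⁻¹' periodCell (m + 1) = Icc 0 (2 * π) ×ˢ periodCell m :=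
    ((Fin.insertNthOrderIso (fun _ => ℝ) ℓ).preimage_Icc _ _).trans (Icc_prod_eq _ _)
  have hint : IntegrableOn (fun z : (Fin m → ℝ) × ℝ => F (ℓ.insertNth z.2 z.1))
      (periodCell m ×ˢ Icc 0 (2 * π)) (volume.prod volume) :=
    (hF.comp (continuous_snd.finInsertNth ℓ continuous_fst)).continuousOn.integrableOn_compact
      (isCompact_Icc.prod isCompact_Icc)
  rw [← he.map_eq, setIntegral_map_equiv, hcell, Measure.volume_eq_prod,
    ← setIntegral_prod_swap]
  refine (setIntegral_prod _ hint).trans (setIntegral_congr_fun measurableSet_Icc fun y _ => ?_)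
  rw [intervalIntegral.integral_of_le two_pi_pos.le, integral_Icc_eq_integral_Ioc]

variable [CompleteSpace E] in
theorem setIntegral_periodCell_const {n : ℕ} (c : E) :
    ∫ _ in periodCell n, c = (2 * π) ^ n • c := by
  rw [setIntegral_const, measureReal_def, Real.volume_Icc_pi_toReal fun _ => by positivity]
  simp

end PeriodCell

theorem insertNth_eq_insertNth_zero_add_single {α : Type*} [AddZeroClass α] {m : ℕ}
    (ℓ : Fin (m + 1)) (t : α) (y : Fin m → α) :
    (ℓ.insertNth t y : Fin (m + 1) → α) = ℓ.insertNth 0 y + Pi.single ℓ t :=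
  funext (ℓ.forall_iff_succAbove.2 ⟨by simp, fun j => by simp⟩)

theorem eq_of_forall_add_single_eq {ι α β : Type*} [Fintype ι] [DecidableEq ι] [AddCommMonoid α]
    {F : (ι → α) → β} (h : ∀ i x s, F (x + Pi.single i s) = F x) (x : ι → α) : F x = F 0 := by
  have hsum (s : Finset ι) : F (∑ i ∈ s, Pi.single i (x i)) = F 0 := by
    induction s using Finset.induction_on with
    | empty => simp
    | insert i s hi ih => rw [Finset.sum_insert hi, add_comm, h, ih]
  simpa [Finset.univ_sum_single] using hsum Finset.univ

noncomputable section LineAverage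

variable {E : Type*} [NormedAddCommGroup E] [NormedSpace ℝ E] {n : ℕ}

def TorusPeriodic (f : (Fin n → ℝ) → E) : Prop :=
  ∀ x ℓ, f (x + Pi.single ℓ (2 * π)) = f x

def lineAverage (ℓ : Fin n) (f : (Fin n → ℝ) → E) (x : Fin n → ℝ) : E :=
  (2 * π)⁻¹ • ∫ t in 0..2 * π, f (x + Pi.single ℓ t)

-- Integrating by parts, `∫₀^{2π} t g'(t) dt = 2π g(2π) - ∫₀^{2π} g`, and `g(2π) = g(0)` for the
-- periodic `g t = f (x + t eₗ)`; so `∂ₗ (linePrimitive ℓ f) = f - lineAverage ℓ f`.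
def linePrimitive (ℓ : Fin n) (f : (Fin n → ℝ) → E) (x : Fin n → ℝ) : E :=
  (2 * π)⁻¹ • ∫ t in 0..2 * π, t • f (x + Pi.single ℓ t)

theorem contDiff_add_single {k : ℕ∞} (ℓ : Fin n) :
    ContDiff ℝ k fun p : (Fin n → ℝ) × ℝ => p.1 + Pi.single ℓ p.2 :=
  contDiff_fst.add ((contDiff_single (fun _ => ℝ) _ ℓ).comp contDiff_snd)

variable {ℓ : Fin n} {f : (Fin n → ℝ) → E}

theorem lineAverage_add_of_forall_add_eq {v : Fin n → ℝ} (hv : ∀ y, f (y + v) = f y)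
    (x : Fin n → ℝ) : lineAverage ℓ f (x + v) = lineAverage ℓ f x := by
  simp only [lineAverage, add_right_comm x v, hv]

theorem TorusPeriodic.lineAverage (hf : TorusPeriodic f) :
    TorusPeriodic (_root_.lineAverage ℓ f) :=
  fun x m => lineAverage_add_of_forall_add_eq (fun y => hf y m) x

theorem TorusPeriodic.linePrimitive (hf : TorusPeriodic f) :
    TorusPeriodic (_root_.linePrimitive ℓ f) := fun x m => by
  simp only [_root_.linePrimitive, add_right_comm x, fun y => hf y m]

theorem TorusPeriodic.lineAverage_add_single (hf : TorusPeriodic f) (x : Fin n → ℝ) (s : ℝ) :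
    _root_.lineAverage ℓ f (x + Pi.single ℓ s) = _root_.lineAverage ℓ f x := by
  have hper : Function.Periodic (fun t => f (x + Pi.single ℓ t)) (2 * π) := fun t => by
    simp only [Pi.single_add, ← add_assoc, fun y => hf y ℓ]
  simp only [_root_.lineAverage, add_assoc, ← Pi.single_add]
  have hshift := intervalIntegral.integral_comp_add_left (a := 0) (b := 2 * π)
    (fun t => f (x + Pi.single ℓ t)) s
  rw [hshift, add_zero, hper.intervalIntegral_add_eq s 0, zero_add]

variable [CompleteSpace E]

theorem ContDiff.lineAverage {k : ℕ∞} (hf : ContDiff ℝ k f) :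
    ContDiff ℝ k (_root_.lineAverage ℓ f) := by
  have : ContDiff ℝ k fun p : (Fin n → ℝ) × ℝ => f (p.1 + Pi.single ℓ p.2) :=
    hf.comp (contDiff_add_single ℓ)
  exact (contDiff_intervalIntegral this 0 _).const_smul _

theorem ContDiff.linePrimitive {k : ℕ∞} (hf : ContDiff ℝ k f) :
    ContDiff ℝ k (_root_.linePrimitive ℓ f) := by
  have : ContDiff ℝ k fun p : (Fin n → ℝ) × ℝ => p.2 • f (p.1 + Pi.single ℓ p.2) :=
    contDiff_snd.smul (hf.comp (contDiff_add_single ℓ))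
  exact (contDiff_intervalIntegral this 0 _).const_smul _

theorem TorusPeriodic.fderiv_linePrimitive_single (hper : TorusPeriodic f) (hf : ContDiff ℝ 1 f)
    (x : Fin n → ℝ) :
    fderiv ℝ (_root_.linePrimitive ℓ f) x (Pi.single ℓ 1) = f x - _root_.lineAverage ℓ f x := by
  have hline : Continuous fun p : (Fin n → ℝ) × ℝ => p.1 + Pi.single ℓ p.2 :=
    (contDiff_add_single (k := 0) ℓ).continuous
  have hφ (y : Fin n → ℝ) (t : ℝ) : HasFDerivAt (fun y => t • f (y + Pi.single ℓ t))
      (t • fderiv ℝ f (y + Pi.single ℓ t)) y :=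
    ((hasFDerivAt_comp_add_right _).2 (hf.differentiable one_ne_zero _).hasFDerivAt).const_smul t
  have hderiv : HasFDerivAt (_root_.linePrimitive ℓ f)
      ((2 * π)⁻¹ • ∫ t in 0..2 * π, t • fderiv ℝ f (x + Pi.single ℓ t)) x :=
    (hasFDerivAt_intervalIntegral_of_continuous
      (continuous_snd.smul (hf.continuous.comp hline))
      (continuous_snd.smul ((hf.continuous_fderiv one_ne_zero).comp hline)) hφ 0 (2 * π)
      x).const_smul _
  have hline' (t : ℝ) : HasDerivAt (fun t => f (x + Pi.single ℓ t))
      (fderiv ℝ f (x + Pi.single ℓ t) (Pi.single ℓ 1)) t :=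
    (hf.differentiable one_ne_zero _).hasFDerivAt.comp_hasDerivAt t
      ((hasDerivAt_single ℓ t).const_add x)
  have hfd : Continuous fun t => fderiv ℝ f (x + Pi.single ℓ t) :=
    (hf.continuous_fderiv one_ne_zero).comp (hline.comp (.prodMk_right x))
  have hparts : ∫ t in 0..2 * π, t • fderiv ℝ f (x + Pi.single ℓ t) (Pi.single ℓ 1)
      = (2 * π) • f x - ∫ t in 0..2 * π, f (x + Pi.single ℓ t) := by
    rw [intervalIntegral.integral_smul_deriv_eq_deriv_smul (fun t _ => hasDerivAt_id' t)
      (fun t _ => hline' t) intervalIntegrable_const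
      ((hfd.clm_apply continuous_const).intervalIntegrable _ _)]
    simp [hper x ℓ]
  have hint : IntervalIntegrable (fun t => t • fderiv ℝ f (x + Pi.single ℓ t)) volume 0 (2 * π) :=
    (continuous_id.smul hfd).intervalIntegrable _ _
  rw [hderiv.fderiv, smul_apply, ContinuousLinearMap.intervalIntegral_apply hint]
  simp only [smul_apply, hparts, smul_sub, smul_smul,
    inv_mul_cancel₀ two_pi_pos.ne', one_smul, _root_.lineAverage]

theorem TorusPeriodic.setIntegral_periodCell_lineAverage (hper : TorusPeriodic f)
    (hf : Continuous f) :
    ∫ x in periodCell n, _root_.lineAverage ℓ f x = ∫ x in periodCell n, f x := by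
  obtain ⟨m, rfl⟩ : ∃ m, n = m + 1 := ⟨n - 1, by have := ℓ.pos; omega⟩
  have hcont : Continuous (_root_.lineAverage ℓ f) :=
    (ContDiff.lineAverage (k := 0) (contDiff_zero.2 hf)).continuous
  rw [setIntegral_periodCell_succ ℓ hcont, setIntegral_periodCell_succ ℓ hf]
  refine setIntegral_congr_fun measurableSet_Icc fun y _ => ?_
  have hconst (t : ℝ) : _root_.lineAverage ℓ f (ℓ.insertNth t y)
      = _root_.lineAverage ℓ f (ℓ.insertNth 0 y) := by
    rw [insertNth_eq_insertNth_zero_add_single ℓ t, hper.lineAverage_add_single]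
  simp_rw [hconst]
  rw [intervalIntegral.integral_const, sub_zero, _root_.lineAverage, smul_smul,
    mul_inv_cancel₀ two_pi_pos.ne', one_smul]
  simp only [← insertNth_eq_insertNth_zero_add_single]

end LineAverage

section SmoothPeriodic

variable {n : ℕ}

theorem mem_smoothPeriodic {f : (Fin n → ℝ) → ℂ} :
    f ∈ SmoothPeriodic n ↔ ContDiff ℝ (⊤ : ℕ∞) f ∧ TorusPeriodic f :=
  Iff.rfl

noncomputable def SmoothPeriodic.lineAverage (ℓ : Fin n) (f : SmoothPeriodic n) :
    SmoothPeriodic n :=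
  ⟨_root_.lineAverage ℓ f, f.2.1.lineAverage, TorusPeriodic.lineAverage f.2.2⟩

def VanishesOnPartialDerivatives (χ : SmoothPeriodic n →ₗ[ℂ] ℂ) : Prop :=
  ∀ (f : SmoothPeriodic n) (ℓ : Fin n)
    (hd : (fun x => fderiv ℝ (f : (Fin n → ℝ) → ℂ) x (Pi.single ℓ 1)) ∈ SmoothPeriodic n),
    χ ⟨fun x => fderiv ℝ (f : (Fin n → ℝ) → ℂ) x (Pi.single ℓ 1), hd⟩ = 0

theorem VanishesOnPartialDerivatives.map_lineAverage {χ : SmoothPeriodic n →ₗ[ℂ] ℂ}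
    (hχ : VanishesOnPartialDerivatives χ) (ℓ : Fin n) (f : SmoothPeriodic n) :
    χ (SmoothPeriodic.lineAverage ℓ f) = χ f := by
  obtain ⟨hf, hper⟩ := mem_smoothPeriodic.1 f.2
  let P : SmoothPeriodic n := ⟨linePrimitive ℓ f, hf.linePrimitive, hper.linePrimitive⟩
  have hP : (fun x => fderiv ℝ P.1 x (Pi.single ℓ 1)) = (f - SmoothPeriodic.lineAverage ℓ f).1 :=
    funext (hper.fderiv_linePrimitive_single (hf.of_le (by exact_mod_cast le_top)))
  have h0 := hχ P ℓ (hP ▸ (f - SmoothPeriodic.lineAverage ℓ f).2)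
  rwa [show (⟨_, _⟩ : SmoothPeriodic n) = f - SmoothPeriodic.lineAverage ℓ f from Subtype.ext hP,
    map_sub, sub_eq_zero, eq_comm] at h0

theorem VanishesOnPartialDerivatives.map_foldr_lineAverage {χ : SmoothPeriodic n →ₗ[ℂ] ℂ}
    (hχ : VanishesOnPartialDerivatives χ) (L : List (Fin n)) (f : SmoothPeriodic n) :
    χ (L.foldr SmoothPeriodic.lineAverage f) = χ f := by
  induction L with
  | nil => rfl
  | cons ℓ L ih => rw [List.foldr_cons, hχ.map_lineAverage, ih]

theorem setIntegral_periodCell_foldr_lineAverage (L : List (Fin n)) (f : SmoothPeriodic n) :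
    ∫ x in periodCell n, (L.foldr SmoothPeriodic.lineAverage f).1 x
      = ∫ x in periodCell n, f.1 x := by
  induction L with
  | nil => rfl
  | cons ℓ L ih =>
    obtain ⟨hg, hper⟩ := mem_smoothPeriodic.1 (L.foldr SmoothPeriodic.lineAverage f).2
    rw [List.foldr_cons, ← ih]
    exact hper.setIntegral_periodCell_lineAverage hg.continuous

theorem foldr_lineAverage_add_single {L : List (Fin n)} {ℓ : Fin n} (hℓ : ℓ ∈ L)
    (f : SmoothPeriodic n) (x : Fin n → ℝ) (s : ℝ) :
    (L.foldr SmoothPeriodic.lineAverage f).1 (x + Pi.single ℓ s)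
      = (L.foldr SmoothPeriodic.lineAverage f).1 x := by
  induction L generalizing x with
  | nil => simp at hℓ
  | cons m L ih =>
    rw [List.foldr_cons]
    rcases List.mem_cons.1 hℓ with rfl | hℓ
    · exact TorusPeriodic.lineAverage_add_single (L.foldr SmoothPeriodic.lineAverage f).2.2 x s
    · exact lineAverage_add_of_forall_add_eq (ih hℓ) x

end SmoothPeriodic

theorem linear_functional_vanishing_on_derivs_is_integration_general
    (n : ℕ) (χ : SmoothPeriodic n →ₗ[ℂ] ℂ)
    (hχ : ∀ (f : SmoothPeriodic n) (ℓ : Fin n)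
      (hd : (fun x => fderiv ℝ (f : (Fin n → ℝ) → ℂ) x (Pi.single ℓ 1)) ∈ SmoothPeriodic n),
      χ ⟨fun x => fderiv ℝ (f : (Fin n → ℝ) → ℂ) x (Pi.single ℓ 1), hd⟩ = 0)
    (hone : (fun _ => (1 : ℂ)) ∈ SmoothPeriodic n) :
    ∀ f : SmoothPeriodic n,
      χ f = (((2 * π) ^ n : ℝ))⁻¹ * χ ⟨fun _ => (1 : ℂ), hone⟩
        * ∫ x in Set.Icc (0 : Fin n → ℝ) (fun _ => 2 * π), (f : (Fin n → ℝ) → ℂ) x := by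
  intro f
  set F : SmoothPeriodic n := (List.finRange n).foldr SmoothPeriodic.lineAverage f
  have hconst (x : Fin n → ℝ) : F.1 x = F.1 0 :=
    eq_of_forall_add_single_eq (fun ℓ => foldr_lineAverage_add_single (List.mem_finRange ℓ) f) x
  have hF : F = F.1 0 • ⟨fun _ => 1, hone⟩ := Subtype.ext (funext fun x => by simp [hconst x])
  have hint : ∫ x in periodCell n, f.1 x = (2 * π) ^ n • F.1 0 := by
    rw [← setIntegral_periodCell_foldr_lineAverage (List.finRange n),
      setIntegral_congr_fun measurableSet_Icc fun x _ => hconst x, setIntegral_periodCell_const]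
  have hχF : χ f = χ F := (VanishesOnPartialDerivatives.map_foldr_lineAverage hχ _ f).symm
  rw [hχF, hF, map_smul, hint, smul_eq_mul, Complex.real_smul]
  push_cast
  field_simp

/-- Let `n ≥ 1` and let `χ` be a `ℂ`-linear functional on `C^∞(𝕋ⁿ; ℂ)` such
that `χ(∂_{x_ℓ} f) = 0` for every `f ∈ C^∞(𝕋ⁿ; ℂ)` and every `ℓ`. Then for every
`f ∈ C^∞(𝕋ⁿ; ℂ)`, `χ(f) = c ∫_{[0,2π]^n} f(x) dx` where `c = (2π)^{−n} χ(1)`. -/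
theorem linear_functional_vanishing_on_derivs_is_integration
    (n : ℕ) (hn : 1 ≤ n) (χ : SmoothPeriodic n →ₗ[ℂ] ℂ)
    (hχ : ∀ (f : SmoothPeriodic n) (ℓ : Fin n)
      (hd : (fun x => fderiv ℝ (f : (Fin n → ℝ) → ℂ) x (Pi.single ℓ 1)) ∈ SmoothPeriodic n),
      χ ⟨fun x => fderiv ℝ (f : (Fin n → ℝ) → ℂ) x (Pi.single ℓ 1), hd⟩ = 0)
    (hone : (fun _ => (1 : ℂ)) ∈ SmoothPeriodic n) :
    ∀ f : SmoothPeriodic n,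
      χ f = (((2 * π) ^ n : ℝ))⁻¹ * χ ⟨fun _ => (1 : ℂ), hone⟩
        * ∫ x in Set.Icc (0 : Fin n → ℝ) (fun _ => 2 * π), (f : (Fin n → ℝ) → ℂ) x :=
  linear_functional_vanishing_on_derivs_is_integration_general n χ hχ hone
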